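/- If A is a Type 1 RE matrix with parameters (λ, μ, b₋, b₊, y) and one lets μ → 0 (i.e. sets μ = 0 and deletes the now-forced-zero off-diagonal entries), the resulting matrix λ Σ_{i=1}^{b₊-1} e^i_i + Σ_{i∈Y'} y_i e^{σ(i)}_i is a Type 2 RE matrix; in particular the limit of Type 1 solutions as one eigenvalue tends to zero satisfies the reflection equation. -/

import Mathlib

open Matrix Kronecker

/-- The coefficient `s_{ik}`: `q - q⁻¹` if `i < k`, `q` if `i = k`, `0` if `i > k`. -/
noncomputable def sCoeff {n : ℕ} (q : ℂ) (i k : Fin n) : ℂ :=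
  if (i : ℕ) < (k : ℕ) then q - q⁻¹ else if i = k then q else 0

/-- The standard `U_q(gl(n))` braid matrix
`S = Σ_{i,k} s_{ik} e^i_i ⊗ e^k_k + Σ_{i≠j} e^i_j ⊗ e^j_i` on `ℂ^n ⊗ ℂ^n`. -/
noncomputable def braidS (n : ℕ) (q : ℂ) :
    Matrix (Fin n × Fin n) (Fin n × Fin n) ℂ :=
  fun p r =>
    (if p.1 = r.1 ∧ p.2 = r.2 then sCoeff q p.1 p.2 else 0) +
    (if p.1 ≠ p.2 ∧ r.1 = p.2 ∧ r.2 = p.1 then 1 else 0)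

/-- `A₂ = 1 ⊗ A` on `ℂ^n ⊗ ℂ^n`. -/
noncomputable def A2 {n : ℕ} (A : Matrix (Fin n) (Fin n) ℂ) :
    Matrix (Fin n × Fin n) (Fin n × Fin n) ℂ :=
  (1 : Matrix (Fin n) (Fin n) ℂ) ⊗ₖ A

/-- The reflection equation `S A₂ S A₂ = A₂ S A₂ S`. -/
noncomputable def RE (n : ℕ) (q : ℂ) (A : Matrix (Fin n) (Fin n) ℂ) : Prop :=
  braidS n q * A2 A * braidS n q * A2 A = A2 A * braidS n q * A2 A * braidS n q

/-- Membership in `Y = [1,b₋] ∪ [b₊, b₊+b₋-1]` (1-based). -/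
def memY (bm bp k : ℕ) : Prop := (1 ≤ k ∧ k ≤ bm) ∨ (bp ≤ k ∧ k ≤ bp + bm - 1)

instance (bm bp k : ℕ) : Decidable (memY bm bp k) := by unfold memY; infer_instance

/-!
Write the matrix as `D + E`, with `D = λ · diag(1, …, 1, 0, …, 0)` (switching off at
`m = b₊ - 1`) and `E` its off-diagonal part. The reflection equation says that `S` commutes
with `A₂ S A₂`, which is bilinear in `A`; so it suffices that `S` commutes with `D₂ S D₂`,
with `E₂ S E₂` and with `D₂ S E₂ + E₂ S D₂`.
* `D₂ S D₂` lives on the planes spanned by `eₐ ⊗ e_b` and `e_b ⊗ eₐ`, where commuting with `S`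
  amounts to `d_k (d_k - d_i) = 0` for `i < k`.
* `E` squares to zero entrywise and is supported on an antidiagonal `c + w = const`, so
  `E_{bu} E_{av} ≠ 0` forces `s_{ab} = s_{uv}`.
* Every nonzero entry of `E` joins an index below `m` to one at or above `m`; the cross terms
  then cancel because `s_{ab} + s_{ba} = q - q⁻¹` for `a ≠ b` and `q - (q - q⁻¹) = q⁻¹`.
-/

variable {n : ℕ}

lemma braidS_transpose (q : ℂ) : (braidS n q)ᵀ = braidS n q := by
  ext ⟨a, b⟩ ⟨c, d⟩
  simp only [transpose_apply, braidS]
  congr 1 <;> aesop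

lemma braidS_mul_apply (q : ℂ) (M : Matrix (Fin n × Fin n) (Fin n × Fin n) ℂ)
    (a b : Fin n) (r : Fin n × Fin n) :
    (braidS n q * M) (a, b) r = sCoeff q a b * M (a, b) r + if a ≠ b then M (b, a) r else 0 := by
  simp [braidS, Matrix.mul_apply, Fintype.sum_prod_type, add_mul, ite_and, Finset.sum_add_distrib]

lemma mul_braidS_apply (q : ℂ) (M : Matrix (Fin n × Fin n) (Fin n × Fin n) ℂ)
    (p : Fin n × Fin n) (u v : Fin n) :
    (M * braidS n q) p (u, v) = sCoeff q u v * M p (u, v) + if u ≠ v then M p (v, u) else 0 := by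
  rw [← transpose_apply (M * _), transpose_mul, braidS_transpose, braidS_mul_apply]
  rfl

lemma A2_apply (X : Matrix (Fin n) (Fin n) ℂ) (a b c d : Fin n) :
    A2 X (a, b) (c, d) = if a = c then X b d else 0 := by
  simp [A2, one_apply, ite_mul]

lemma mul_A2_apply (M : Matrix (Fin n × Fin n) (Fin n × Fin n) ℂ) (Y : Matrix (Fin n) (Fin n) ℂ)
    (p : Fin n × Fin n) (u v : Fin n) :
    (M * A2 Y) p (u, v) = ∑ h, M p (u, h) * Y h v := by
  simp [A2, Matrix.mul_apply, Fintype.sum_prod_type, one_apply, mul_ite]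

lemma A2_mul_braidS_mul_A2_apply (q : ℂ) (X Y : Matrix (Fin n) (Fin n) ℂ) (a b u v : Fin n) :
    (A2 X * braidS n q * A2 Y) (a, b) (u, v) =
      if a = u then ∑ h, sCoeff q a h * X b h * Y h v else X b u * Y a v := by
  simp only [mul_A2_apply, mul_braidS_apply, A2_apply]
  split_ifs with hau
  · subst hau
    refine Finset.sum_congr rfl fun h _ => ?_
    split_ifs <;> simp_all
  · rw [Finset.sum_eq_single a (fun h _ hne => by simp [Ne.symm hne]) (by simp)]
    simp [Ne.symm hau]

lemma A2_diagonal_mul_braidS_mul_A2_apply (q : ℂ) (d : Fin n → ℂ) (Y : Matrix (Fin n) (Fin n) ℂ)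
    (a b u v : Fin n) :
    (A2 (diagonal d) * braidS n q * A2 Y) (a, b) (u, v) =
      if a = u then sCoeff q a b * d b * Y b v else if b = u then d b * Y a v else 0 := by
  simp only [A2_mul_braidS_mul_A2_apply, diagonal_apply]
  split_ifs <;> simp_all

lemma A2_mul_braidS_mul_A2_diagonal_apply (q : ℂ) (X : Matrix (Fin n) (Fin n) ℂ) (d : Fin n → ℂ)
    (a b u v : Fin n) :
    (A2 X * braidS n q * A2 (diagonal d)) (a, b) (u, v) =
      if a = u then sCoeff q a v * X b v * d v else if a = v then X b u * d a else 0 := by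
  simp only [A2_mul_braidS_mul_A2_apply, diagonal_apply]
  split_ifs <;> simp_all

lemma sCoeff_of_gt (q : ℂ) {i k : Fin n} (h : k < i) : sCoeff q i k = 0 := by
  simp [sCoeff, h.not_gt, h.ne']

lemma sCoeff_eq_of_add_eq (q : ℂ) {a b u v : Fin n} (h : (a : ℕ) + v = b + u) :
    sCoeff q a b = sCoeff q u v := by
  have hlt : (a : ℕ) < b ↔ (u : ℕ) < v := by omega
  have heq : a = b ↔ u = v := by simp only [Fin.ext_iff]; omega
  simp only [sCoeff, hlt, heq]

lemma RE_iff_commute (q : ℂ) (A : Matrix (Fin n) (Fin n) ℂ) :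
    RE n q A ↔ Commute (braidS n q) (A2 A * braidS n q * A2 A) := by
  simp only [RE, Commute, SemiconjBy, Matrix.mul_assoc]

lemma commute_braidS_iff (q : ℂ) (M : Matrix (Fin n × Fin n) (Fin n × Fin n) ℂ) :
    Commute (braidS n q) M ↔ ∀ a b u v : Fin n,
      sCoeff q a b * M (a, b) (u, v) + (if a ≠ b then M (b, a) (u, v) else 0) =
        sCoeff q u v * M (a, b) (u, v) + if u ≠ v then M (a, b) (v, u) else 0 := by
  simp only [Commute, SemiconjBy, ← braidS_mul_apply, ← mul_braidS_apply]
  refine ⟨fun h a b u v => by rw [h], fun h => ?_⟩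
  ext ⟨a, b⟩ ⟨u, v⟩
  exact h a b u v

lemma RE_add_of_commute (q : ℂ) (D E : Matrix (Fin n) (Fin n) ℂ)
    (hDD : Commute (braidS n q) (A2 D * braidS n q * A2 D))
    (hDE : Commute (braidS n q) (A2 D * braidS n q * A2 E + A2 E * braidS n q * A2 D))
    (hEE : Commute (braidS n q) (A2 E * braidS n q * A2 E)) :
    RE n q (D + E) := by
  have hsplit : A2 (D + E) * braidS n q * A2 (D + E) = A2 D * braidS n q * A2 D +
      (A2 D * braidS n q * A2 E + A2 E * braidS n q * A2 D) + A2 E * braidS n q * A2 E := by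
    simp only [A2, kronecker_add, add_mul, mul_add]
    abel
  rw [RE_iff_commute, hsplit]
  exact (hDD.add_right hDE).add_right hEE

lemma commute_braidS_sandwich_diagonal (q : ℂ) (d : Fin n → ℂ)
    (hd : ∀ i k, i < k → d k = 0 ∨ d i = d k) :
    Commute (braidS n q) (A2 (diagonal d) * braidS n q * A2 (diagonal d)) := by
  rw [commute_braidS_iff]
  intro a b u v
  simp only [A2_diagonal_mul_braidS_mul_A2_apply, diagonal_apply, mul_ite, mul_zero]
  by_cases hab : a = u ∧ b = v
  · obtain ⟨rfl, rfl⟩ := hab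
    by_cases h : a = b
    · simp [h]
    · simp [h, Ne.symm h, mul_comm]
  by_cases hba : b = u ∧ a = v
  · obtain ⟨rfl, rfl⟩ := hba
    have hne : a ≠ b := fun h => hab ⟨h, h.symm⟩
    rcases hne.lt_or_gt with h | h
    · rcases hd a b h with h0 | h0 <;> simp [sCoeff_of_gt q h, h0, hne, Ne.symm hne]
      ring
    · rcases hd b a h with h0 | h0 <;> simp [sCoeff_of_gt q h, h0, hne, Ne.symm hne]
      ring
  · simp only [not_and] at hab hba
    split_ifs <;> simp_all

lemma commute_braidS_sandwich_of_antidiagonal (q : ℂ) (E : Matrix (Fin n) (Fin n) ℂ) (N : ℕ)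
    (hsq : ∀ x h z, E x h * E h z = 0) (hanti : ∀ c w, E c w ≠ 0 → (c : ℕ) + w = N) :
    Commute (braidS n q) (A2 E * braidS n q * A2 E) := by
  have hM : ∀ a b u v, (A2 E * braidS n q * A2 E) (a, b) (u, v) = E b u * E a v := by
    intro a b u v
    rw [A2_mul_braidS_mul_A2_apply]
    split_ifs with hau
    · subst hau
      simp [mul_assoc, hsq]
    · rfl
  rw [commute_braidS_iff]
  intro a b u v
  simp only [hM]
  have hs : sCoeff q a b * (E b u * E a v) = sCoeff q u v * (E b u * E a v) := by
    by_cases h : E b u * E a v = 0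
    · simp [h]
    obtain ⟨hbu, hav⟩ := mul_ne_zero_iff.mp h
    have := hanti _ _ hbu
    have := hanti _ _ hav
    rw [sCoeff_eq_of_add_eq q (a := a) (b := b) (u := u) (v := v) (by omega)]
  have hne : (if a ≠ b then E a u * E b v else 0) = if u ≠ v then E b v * E a u else 0 := by
    by_cases h : E a u * E b v = 0
    · simp [h, mul_comm (E b v)]
    obtain ⟨hau, hbv⟩ := mul_ne_zero_iff.mp h
    have hiff : a = b ↔ u = v := by
      have := hanti _ _ hau
      have := hanti _ _ hbv
      simp only [Fin.ext_iff]
      omega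
    simp only [ne_eq, hiff, mul_comm]
  rw [hs, hne]

def leadingDiag (m : ℕ) (lam : ℂ) (i : Fin n) : ℂ := if (i : ℕ) < m then lam else 0

lemma leadingDiag_eq_zero_or_eq (m : ℕ) (lam : ℂ) {i k : Fin n} (h : i < k) :
    leadingDiag m lam k = 0 ∨ leadingDiag m lam i = leadingDiag m lam k := by
  unfold leadingDiag
  split_ifs <;> first | (left; rfl) | (right; rfl) | omega

def Straddles (m : ℕ) (c w : Fin n) : Prop := (w : ℕ) < m ∧ m ≤ c ∨ (c : ℕ) < m ∧ m ≤ w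

lemma Straddles.symm {m : ℕ} {c w : Fin n} (h : Straddles m c w) : Straddles m w c :=
  Or.symm h

/- The coefficients of `E b v` in the cross-term commutator at `((a, b), (a, v))`, and of
`E a v` at `((a, b), (b, v))` (the latter also covers `((a, b), (u, a))` by symmetry). -/
lemma leadingDiag_cross_coeff_eq {q : ℂ} (hq : q ≠ 0) (m : ℕ) (lam : ℂ) {a b v : Fin n}
    (hbv : Straddles m b v) :
    sCoeff q a b * (sCoeff q a b * leadingDiag m lam b + sCoeff q a v * leadingDiag m lam v) +
        (if a ≠ b then leadingDiag m lam a else 0) =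
      sCoeff q a v * (sCoeff q a b * leadingDiag m lam b + sCoeff q a v * leadingDiag m lam v) +
        if a ≠ v then leadingDiag m lam a else 0 := by
  simp only [Straddles] at hbv
  simp only [sCoeff, leadingDiag, ne_eq, Fin.ext_iff]
  split_ifs <;> first | omega | (field_simp <;> ring)

lemma leadingDiag_cross_coeff_eq_zero (q : ℂ) (m : ℕ) (lam : ℂ) {a b v : Fin n}
    (hav : Straddles m a v) (hab : a ≠ b) :
    sCoeff q b a * leadingDiag m lam a + sCoeff q a b * leadingDiag m lam b +
      sCoeff q b v * (leadingDiag m lam v - leadingDiag m lam b) = 0 := by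
  simp only [Straddles] at hav
  simp only [sCoeff, leadingDiag, ne_eq, Fin.ext_iff] at hab ⊢
  split_ifs <;> first | omega | ring

lemma commute_braidS_sandwich_cross {q : ℂ} (hq : q ≠ 0) (m : ℕ) (lam : ℂ)
    (E : Matrix (Fin n) (Fin n) ℂ) (hE : ∀ c w, E c w ≠ 0 → Straddles m c w) :
    Commute (braidS n q) (A2 (diagonal (leadingDiag m lam)) * braidS n q * A2 E +
      A2 E * braidS n q * A2 (diagonal (leadingDiag m lam))) := by
  have hdiag : ∀ i, E i i = 0 := fun i => by
    by_contra h
    have := hE i i h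
    simp only [Straddles] at this
    omega
  rw [commute_braidS_iff]
  intro a b u v
  simp only [Matrix.add_apply, A2_diagonal_mul_braidS_mul_A2_apply,
    A2_mul_braidS_mul_A2_diagonal_apply]
  by_cases hau : a = u
  · subst hau
    simp only [hdiag, if_true, ne_eq, ite_not, mul_zero, zero_mul]
    by_cases hbv : E b v = 0
    · split_ifs <;> grind
    have key := leadingDiag_cross_coeff_eq hq m lam (a := a) (hE b v hbv)
    split_ifs at key ⊢ <;> first | linear_combination E b v * key | grind
  by_cases hbu : b = u
  · subst hbu
    simp only [hdiag, hau, if_true, if_false, ne_eq, ite_not, mul_zero, zero_mul]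
    by_cases hav : E a v = 0
    · split_ifs <;> grind
    have key := leadingDiag_cross_coeff_eq_zero q m lam (hE a v hav) hau
    split_ifs <;> linear_combination E a v * key
  · simp only [hau, hbu, if_false, ne_eq, ite_not]
    by_cases hav : a = v
    · subst hav
      by_cases hbu' : E b u = 0
      · split_ifs <;> grind
      have key := leadingDiag_cross_coeff_eq_zero q m lam (hE b u hbu').symm (Ne.symm hau)
      split_ifs <;> first | linear_combination E b u * key | grind
    · split_ifs <;> grind

theorem RE_diagonal_leadingDiag_add {q : ℂ} (hq : q ≠ 0) (m N : ℕ) (lam : ℂ)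
    (E : Matrix (Fin n) (Fin n) ℂ) (hsq : ∀ x h z, E x h * E h z = 0)
    (hE : ∀ c w, E c w ≠ 0 → Straddles m c w ∧ (c : ℕ) + w = N) :
    RE n q (diagonal (leadingDiag m lam) + E) :=
  RE_add_of_commute q _ _
    (commute_braidS_sandwich_diagonal q _ fun _ _ => leadingDiag_eq_zero_or_eq m lam)
    (commute_braidS_sandwich_cross hq m lam E fun c w h => (hE c w h).1)
    (commute_braidS_sandwich_of_antidiagonal q E N hsq fun c w h => (hE c w h).2)

def typeTwoOffDiag (bm bp : ℕ) (Y' : Finset ℕ) (y : ℕ → ℂ) : Matrix (Fin n) (Fin n) ℂ :=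
  of fun j i =>
    if (i : ℕ) + 1 ∈ Y' ∧ (j : ℕ) + 1 = bp + bm - ((i : ℕ) + 1) then y ((i : ℕ) + 1) else 0

lemma typeTwoOffDiag_support {bm bp : ℕ} {Y' : Finset ℕ} {y : ℕ → ℂ} {j i : Fin n}
    (h : typeTwoOffDiag bm bp Y' y j i ≠ 0) :
    (i : ℕ) + 1 ∈ Y' ∧ (j : ℕ) + 1 = bp + bm - ((i : ℕ) + 1) := by
  by_contra hc
  exact h (if_neg hc)

lemma typeTwoOffDiag_apply_mul_apply_eq_zero {bm bp : ℕ} {Y' : Finset ℕ} (y : ℕ → ℂ)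
    (hpair : ∀ k ∈ Y', bp + bm - k ∉ Y') (x h z : Fin n) :
    typeTwoOffDiag bm bp Y' y x h * typeTwoOffDiag bm bp Y' y h z = 0 := by
  by_contra hne
  obtain ⟨hxh, hhz⟩ := mul_ne_zero_iff.mp hne
  obtain ⟨hz, hh⟩ := typeTwoOffDiag_support hhz
  exact hpair _ hz (hh ▸ (typeTwoOffDiag_support hxh).1)

lemma typeTwoOffDiag_support_straddles {bm bp : ℕ} {Y' : Finset ℕ} {y : ℕ → ℂ} (hb : bm < bp)
    (hY' : ∀ k ∈ Y', memY bm bp k) {c w : Fin n} (h : typeTwoOffDiag bm bp Y' y c w ≠ 0) :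
    Straddles (bp - 1) c w ∧ (c : ℕ) + w = bp + bm - 2 := by
  obtain ⟨hw, hc⟩ := typeTwoOffDiag_support h
  have := hY' _ hw
  simp only [memY, Straddles] at this ⊢
  omega

theorem typeOne_degeneration_solves_RE_general (n : ℕ) (q : ℂ)
    (hq : q ≠ 0) (bm bp : ℕ) (hb : bm < bp)
    (lam : ℂ) (Y' : Finset ℕ)
    (hY' : ∀ k ∈ Y', memY bm bp k)
    (hpair : ∀ k ∈ Y', bp + bm - k ∉ Y')
    (y : ℕ → ℂ) :
    RE n q (fun j i =>
      (if j = i ∧ (i : ℕ) + 1 < bp then lam else 0) +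
      (if (i : ℕ) + 1 ∈ Y' ∧ (j : ℕ) + 1 = bp + bm - ((i : ℕ) + 1) then
        y ((i : ℕ) + 1) else 0)) := by
  have hA : (diagonal (leadingDiag (bp - 1) lam) + typeTwoOffDiag bm bp Y' y :
      Matrix (Fin n) (Fin n) ℂ) = fun j i : Fin n =>
      (if j = i ∧ (i : ℕ) + 1 < bp then lam else 0) +
      (if (i : ℕ) + 1 ∈ Y' ∧ (j : ℕ) + 1 = bp + bm - ((i : ℕ) + 1) then
        y ((i : ℕ) + 1) else 0) := by
    ext j i
    rw [Matrix.add_apply]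
    congr 1
    by_cases h : j = i
    · simp [h, leadingDiag, Nat.lt_sub_iff_add_lt]
    · simp [h]
  rw [← hA]
  exact RE_diagonal_leadingDiag_add hq (bp - 1) (bp + bm - 2) lam _
    (typeTwoOffDiag_apply_mul_apply_eq_zero y hpair) fun _ _ => typeTwoOffDiag_support_straddles hb hY'

/-- The `μ → 0` degeneration of a Type 1 solution is a Type 2 solution: for any
subset `Y' ⊆ Y = [1,b₋] ∪ [b₊,b₊+b₋-1]` meeting each pair `{i, b₊+b₋-i}` in at
most one element, the matrix `λ Σ_{i=1}^{b₊-1} e^i_i + Σ_{i∈Y'} y_i e^{b₊+b₋-i}_i`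
(with all `y_i ≠ 0`) satisfies the reflection equation. -/
theorem typeOne_degeneration_solves_RE (n : ℕ) (hn : 1 ≤ n) (q : ℂ)
    (hq : q ≠ 0) (hq2 : q ^ 2 ≠ 1) (bm bp : ℕ) (hb : bm < bp)
    (hbn : bm + bp ≤ n + 1) (lam : ℂ) (Y' : Finset ℕ)
    (hY' : ∀ k ∈ Y', memY bm bp k)
    (hpair : ∀ k ∈ Y', bp + bm - k ∉ Y')
    (y : ℕ → ℂ) (hy : ∀ k ∈ Y', y k ≠ 0) :
    RE n q (fun j i =>
      (if j = i ∧ (i : ℕ) + 1 < bp then lam else 0) +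
      (if (i : ℕ) + 1 ∈ Y' ∧ (j : ℕ) + 1 = bp + bm - ((i : ℕ) + 1) then
        y ((i : ℕ) + 1) else 0)) :=
  typeOne_degeneration_solves_RE_general n q hq bm bp hb lam Y' hY' hpair y
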